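/- Let μ = λ|_{[-1/2,1/2]} be Lebesgue measure on ℝ restricted to the interval [-1/2, 1/2]. If ν is a frame measure for μ, then the lower Beurling density satisfies D⁻(ν) > 0, and consequently dim ν = 1. -/

import Mathlib

open MeasureTheory Filter Metric Complex Set
open scoped ENNReal NNReal Real Topology

noncomputable section

/-- The Fourier transform of the measure `f dμ` on `ℝ`:
`(f dμ)^(t) = ∫ f(x) e^{-2πi t x} dμ(x)`. -/
def ftm1 (μ : Measure ℝ) (f : ℝ → ℂ) (t : ℝ) : ℂ :=
  ∫ x, f x * Complex.exp (-(2 * Real.pi * t * x) * Complex.I) ∂μ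

/-- `ν` is a Bessel measure for `μ` with bound `B`. -/
def IsBesselBound1 (μ ν : Measure ℝ) (B : ℝ) : Prop :=
  ∀ f : ℝ → ℂ, MemLp f 2 μ →
    ∫⁻ t, (‖ftm1 μ f t‖₊ : ℝ≥0∞) ^ 2 ∂ν ≤ ENNReal.ofReal B * ∫⁻ x, (‖f x‖₊ : ℝ≥0∞) ^ 2 ∂μ

/-- `ν` is a frame measure for `μ` with bounds `A, B`. -/
def IsFrameBounds1 (μ ν : Measure ℝ) (A B : ℝ) : Prop :=
  ∀ f : ℝ → ℂ, MemLp f 2 μ →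
    ENNReal.ofReal A * ∫⁻ x, (‖f x‖₊ : ℝ≥0∞) ^ 2 ∂μ ≤ ∫⁻ t, (‖ftm1 μ f t‖₊ : ℝ≥0∞) ^ 2 ∂ν ∧
    ∫⁻ t, (‖ftm1 μ f t‖₊ : ℝ≥0∞) ^ 2 ∂ν ≤ ENNReal.ofReal B * ∫⁻ x, (‖f x‖₊ : ℝ≥0∞) ^ 2 ∂μ

/-- The interval `x + R·Q` where `Q = [0,1)`. -/
def cube1 (x R : ℝ) : Set ℝ := Set.Ico x (x + R)

/-- The `α`-upper Beurling density on `ℝ`. -/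
def beurlingDensity1 (ν : Measure ℝ) (α : ℝ) : ℝ≥0∞ :=
  limsup (fun R : ℝ => ⨆ x : ℝ, ν (cube1 x R) / ENNReal.ofReal (R ^ α)) atTop

/-- The upper Beurling dimension on `ℝ`. -/
def beurlingDim1 (ν : Measure ℝ) : ℝ≥0∞ :=
  ⨆ (α : ℝ) (_ : 0 ≤ α) (_ : beurlingDensity1 ν α = ∞), ENNReal.ofReal α

/-- The lower Beurling density on `ℝ`: `D⁻(ν) = liminf_{R→∞} inf_x ν(x+RQ)/R`. -/
def lowerBeurlingDensity1 (ν : Measure ℝ) : ℝ≥0∞ :=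
  liminf (fun R : ℝ => ⨅ x : ℝ, ν (cube1 x R) / ENNReal.ofReal R) atTop

/-!
Testing the frame inequality on the characters `e_c(y) = e^{2πicy}`, which have norm one in
`L²(μ)` and Fourier transform `t ↦ sinc (π (t - c))`, gives
`A ≤ ∫ sinc² (π (t - c)) dν(t) ≤ B` for every `c`. As `sinc² ≥ 4 / π²` on `[-π/2, π/2]`, the
upper bound gives `ν [a, a + 1] ≤ π² B / 4` uniformly in `a`, so `ν (x + R Q) = O(R)` and
`dim ν ≤ 1`. As `sinc² (π s) ≤ 1 / (k (k + 1))` for `|s| ≥ k`, the same uniform bound makes the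
part of the integral outside `[c - M, c + M]` at most `π² B / (2 M)`; for `M` large the lower
bound then forces `ν [c - M, c + M] ≥ A / 2`. Hence `ν (x + R Q) ≥ κ R` for some `κ > 0` and
all large `R`, which gives `D⁻(ν) > 0` and `D_α(ν) = ∞` for every `α < 1`.
-/

local notation "μ₀" => volume.restrict (Icc (-(1 / 2) : ℝ) (1 / 2))

namespace Real

lemma sinc_sq_le_one (x : ℝ) : sinc x ^ 2 ≤ 1 :=
  (sq_le_one_iff_abs_le_one _).2 (abs_sinc_le_one x)

lemma sinc_sq_le_one_div_sq {x : ℝ} (hx : x ≠ 0) : sinc x ^ 2 ≤ 1 / x ^ 2 := by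
  rw [sinc_of_ne_zero hx, div_pow]
  exact div_le_div_of_nonneg_right (sin_sq_le_one x) (by positivity)

lemma four_div_pi_sq_le_sinc_sq {x : ℝ} (hx : |x| ≤ π / 2) : 4 / π ^ 2 ≤ sinc x ^ 2 := by
  rcases eq_or_ne x 0 with rfl | hx0
  · rw [sinc_zero, div_le_iff₀ (by positivity)]
    nlinarith [pi_gt_three]
  · have hjordan : 2 / π * |x| ≤ |sin x| := mul_abs_le_abs_sin hx
    have hsinc : 2 / π ≤ |sinc x| := by
      rw [sinc_of_ne_zero hx0, abs_div, le_div_iff₀ (abs_pos.2 hx0)]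
      exact hjordan
    calc 4 / π ^ 2 = (2 / π) ^ 2 := by ring
      _ ≤ |sinc x| ^ 2 := by gcongr
      _ = sinc x ^ 2 := sq_abs _

lemma sinc_pi_mul_sq_le {s k : ℝ} (hk : 1 ≤ k) (hks : k ≤ |s|) :
    sinc (π * s) ^ 2 ≤ 1 / (k * (k + 1)) := by
  have hs : s ≠ 0 := by rintro rfl; simp at hks; linarith
  refine (sinc_sq_le_one_div_sq (mul_ne_zero pi_ne_zero hs)).trans
    (one_div_le_one_div_of_le (by positivity) ?_)
  have hk2 : k ^ 2 ≤ s ^ 2 := by rw [← sq_abs s]; gcongr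
  have hpi : 9 ≤ π ^ 2 := by nlinarith [pi_gt_three]
  calc k * (k + 1) ≤ 9 * k ^ 2 := by nlinarith
    _ ≤ π ^ 2 * s ^ 2 := by gcongr
    _ = (π * s) ^ 2 := by ring

end Real

lemma integral_Icc_exp_neg_two_pi_mul_I (s : ℝ) :
    ∫ y in Icc (-(1 / 2) : ℝ) (1 / 2), exp (-(2 * π * s * y) * I) = Real.sinc (π * s) := by
  rcases eq_or_ne s 0 with rfl | hs
  · norm_num
  set a : ℂ := -(2 * π * s) * I with ha
  have ha0 : a ≠ 0 := by simp [ha, hs, Real.pi_ne_zero]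
  have hsin : exp (-(π * s) * I) - exp ((π * s) * I) = -2 * sin (π * s) * I := by
    rw [exp_mul_I, exp_mul_I, cos_neg, sin_neg]; ring
  calc ∫ y in Icc (-(1 / 2) : ℝ) (1 / 2), exp (-(2 * π * s * y) * I)
      = ∫ y in (-(1 / 2) : ℝ)..(1 / 2), exp (a * y) := by
        rw [integral_Icc_eq_integral_Ioc, intervalIntegral.integral_of_le (by norm_num)]
        congr 1 with y
        rw [ha]; ring_nf
    _ = (exp (a * (1 / 2 : ℝ)) - exp (a * (-(1 / 2) : ℝ))) / a := integral_exp_mul_complex ha0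
    _ = Real.sinc (π * s) := by
        rw [Real.sinc_of_ne_zero (mul_ne_zero Real.pi_ne_zero hs), div_eq_iff ha0]
        have e1 : a * (1 / 2 : ℝ) = -(π * s) * I := by rw [ha]; push_cast; ring
        have e2 : a * (-(1 / 2) : ℝ) = (π * s) * I := by rw [ha]; push_cast; ring
        rw [e1, e2, hsin, ha]
        have hsC : (s : ℂ) ≠ 0 := ofReal_ne_zero.2 hs
        push_cast
        field_simp

lemma ftm1_exp_two_pi_mul_I (c t : ℝ) :
    ftm1 μ₀ (fun y ↦ exp (2 * π * c * y * I)) t = Real.sinc (π * (t - c)) := by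
  rw [ftm1, ← integral_Icc_exp_neg_two_pi_mul_I]
  congr 1 with y
  rw [← Complex.exp_add]
  push_cast
  ring_nf

lemma IsFrameBounds1.isBesselBound1 {μ ν : Measure ℝ} {A B : ℝ} (h : IsFrameBounds1 μ ν A B) :
    IsBesselBound1 μ ν B :=
  fun f hf ↦ (h f hf).2

lemma memLp_exp_two_pi_mul_I (μ : Measure ℝ) [IsFiniteMeasure μ] (c : ℝ) :
    MemLp (fun y : ℝ ↦ exp (2 * π * c * y * I)) 2 μ := by
  refine MemLp.of_bound (by fun_prop) 1 (ae_of_all _ fun y ↦ ?_)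
  rw [← ofReal_ofNat, ← ofReal_mul, ← ofReal_mul, ← ofReal_mul, norm_exp_ofReal_mul_I]

lemma lintegral_nnnorm_exp_two_pi_mul_I_sq (μ : Measure ℝ) (c : ℝ) :
    ∫⁻ y, (‖exp (2 * π * c * y * I)‖₊ : ℝ≥0∞) ^ 2 ∂μ = μ univ := by
  simp only [← ofReal_ofNat, ← ofReal_mul, nnnorm_exp_ofReal_mul_I, ENNReal.coe_one, one_pow,
    lintegral_one]

lemma setLIntegral_iUnion_le_tsum_mul {α : Type*} [MeasurableSpace α] {ν : Measure α}
    {s : ℕ → Set α} (hs : ∀ k, MeasurableSet (s k)) {g : α → ℝ≥0∞} {a : ℕ → ℝ≥0∞}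
    (hg : ∀ k, ∀ t ∈ s k, g t ≤ a k) {C : ℝ≥0∞} (hν : ∀ k, ν (s k) ≤ C) :
    ∫⁻ t in ⋃ k, s k, g t ∂ν ≤ (∑' k, a k) * C := by
  refine (lintegral_iUnion_le _ _).trans ?_
  rw [← ENNReal.tsum_mul_right]
  refine ENNReal.tsum_le_tsum fun k ↦ ?_
  calc ∫⁻ t in s k, g t ∂ν ≤ ∫⁻ _ in s k, a k ∂ν := setLIntegral_mono' (hs k) (hg k)
    _ = a k * ν (s k) := setLIntegral_const _ _
    _ ≤ a k * C := by gcongr; exact hν k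

lemma tsum_ofReal_one_div_mul_add_one_le {M : ℝ} (hM : 0 < M) :
    ∑' k : ℕ, ENNReal.ofReal (1 / ((M + k) * (M + k + 1))) ≤ ENNReal.ofReal (1 / M) := by
  refine ENNReal.tsum_le_of_sum_range_le fun n ↦ ?_
  have htelescope : ∑ k ∈ Finset.range n, 1 / ((M + k) * (M + k + 1)) = 1 / M - 1 / (M + n) := by
    calc ∑ k ∈ Finset.range n, 1 / ((M + k) * (M + k + 1))
        = ∑ k ∈ Finset.range n, (1 / (M + k) - 1 / (M + (k + 1 : ℕ))) := by
          refine Finset.sum_congr rfl fun k _ ↦ ?_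
          push_cast
          field_simp
          ring
      _ = 1 / M - 1 / (M + n) := by rw [Finset.sum_range_sub']; simp
  rw [← ENNReal.ofReal_sum_of_nonneg (fun k _ ↦ by positivity), htelescope]
  exact ENNReal.ofReal_le_ofReal (by simp only [sub_le_self_iff]; positivity)

lemma compl_Icc_subset_iUnion (c M : ℝ) :
    (Icc (c - M) (c + M))ᶜ ⊆
      ⋃ k : ℕ, (Icc (c + M + k) (c + M + k + 1) ∪ Icc (c - M - k - 1) (c - M - k)) := by
  intro t ht
  simp only [mem_compl_iff, mem_Icc, not_and_or, not_le] at ht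
  rcases ht with ht | ht
  · have h1 := Nat.floor_le (sub_nonneg.2 ht.le)
    have h2 := Nat.lt_floor_add_one (c - M - t)
    exact mem_iUnion.2 ⟨⌊c - M - t⌋₊, Or.inr ⟨by linarith, by linarith⟩⟩
  · have h1 := Nat.floor_le (sub_nonneg.2 ht.le)
    have h2 := Nat.lt_floor_add_one (t - (c + M))
    exact mem_iUnion.2 ⟨⌊t - (c + M)⌋₊, Or.inl ⟨by linarith, by linarith⟩⟩

lemma setLIntegral_compl_Icc_sinc_sq_le {ν : Measure ℝ} {C : ℝ≥0∞}
    (hν : ∀ a, ν (Icc a (a + 1)) ≤ C) (c : ℝ) {M : ℝ} (hM : 1 ≤ M) :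
    ∫⁻ t in (Icc (c - M) (c + M))ᶜ, ENNReal.ofReal (Real.sinc (π * (t - c)) ^ 2) ∂ν ≤
      ENNReal.ofReal (1 / M) * (2 * C) := by
  refine (lintegral_mono_set (compl_Icc_subset_iUnion c M)).trans ?_
  refine (setLIntegral_iUnion_le_tsum_mul (fun k ↦ measurableSet_Icc.union measurableSet_Icc)
    (a := fun k : ℕ ↦ ENNReal.ofReal (1 / ((M + k) * (M + k + 1)))) ?_ ?_).trans
    (by gcongr; exact tsum_ofReal_one_div_mul_add_one_le (by linarith))
  · intro k t ht
    have hk : (0 : ℝ) ≤ k := k.cast_nonneg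
    refine ENNReal.ofReal_le_ofReal (Real.sinc_pi_mul_sq_le (by linarith) ?_)
    rcases ht with ⟨ht, -⟩ | ⟨-, ht⟩
    · rw [abs_of_nonneg (by linarith)]; linarith
    · rw [abs_of_nonpos (by linarith)]; linarith
  · intro k
    calc ν (Icc (c + M + k) (c + M + k + 1) ∪ Icc (c - M - k - 1) (c - M - k))
        ≤ C + C := (measure_union_le _ _).trans
          (add_le_add (hν _) (by simpa only [sub_add_cancel] using hν (c - M - k - 1)))
      _ = 2 * C := (two_mul C).symm

section FrameMeasure

variable {ν : Measure ℝ} {A B : ℝ}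

lemma lintegral_nnnorm_ftm1_exp_sq (c : ℝ) :
    ∫⁻ t, (‖ftm1 μ₀ (fun y ↦ exp (2 * π * c * y * I)) t‖₊ : ℝ≥0∞) ^ 2 ∂ν =
      ∫⁻ t, ENNReal.ofReal (Real.sinc (π * (t - c)) ^ 2) ∂ν := by
  refine lintegral_congr fun t ↦ ?_
  rw [ftm1_exp_two_pi_mul_I, ← enorm_eq_nnnorm, ← ofReal_norm, norm_real, Real.norm_eq_abs,
    ← ENNReal.ofReal_pow (abs_nonneg _), sq_abs]

lemma volume_restrict_Icc_univ : μ₀ univ = 1 := by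
  rw [Measure.restrict_apply_univ, Real.volume_Icc]; norm_num

lemma IsBesselBound1.lintegral_sinc_sq_le (h : IsBesselBound1 μ₀ ν B) (c : ℝ) :
    ∫⁻ t, ENNReal.ofReal (Real.sinc (π * (t - c)) ^ 2) ∂ν ≤ ENNReal.ofReal B := by
  have hc := h _ (memLp_exp_two_pi_mul_I _ c)
  rwa [lintegral_nnnorm_ftm1_exp_sq, lintegral_nnnorm_exp_two_pi_mul_I_sq,
    volume_restrict_Icc_univ, mul_one] at hc

lemma IsFrameBounds1.le_lintegral_sinc_sq (h : IsFrameBounds1 μ₀ ν A B) (c : ℝ) :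
    ENNReal.ofReal A ≤ ∫⁻ t, ENNReal.ofReal (Real.sinc (π * (t - c)) ^ 2) ∂ν := by
  have hc := (h _ (memLp_exp_two_pi_mul_I _ c)).1
  rwa [lintegral_nnnorm_ftm1_exp_sq, lintegral_nnnorm_exp_two_pi_mul_I_sq,
    volume_restrict_Icc_univ, mul_one] at hc

lemma IsBesselBound1.measure_Icc_le (h : IsBesselBound1 μ₀ ν B) (a : ℝ) :
    ν (Icc a (a + 1)) ≤ ENNReal.ofReal (π ^ 2 / 4 * B) := by
  set c := a + 1 / 2 with hc
  have hmain : ENNReal.ofReal (4 / π ^ 2) * ν (Icc a (a + 1)) ≤ ENNReal.ofReal B :=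
    calc ENNReal.ofReal (4 / π ^ 2) * ν (Icc a (a + 1))
        = ∫⁻ _ in Icc a (a + 1), ENNReal.ofReal (4 / π ^ 2) ∂ν := (setLIntegral_const _ _).symm
      _ ≤ ∫⁻ t in Icc a (a + 1), ENNReal.ofReal (Real.sinc (π * (t - c)) ^ 2) ∂ν := by
        refine setLIntegral_mono' measurableSet_Icc fun t ⟨h₁, h₂⟩ ↦ ?_
        refine ENNReal.ofReal_le_ofReal (Real.four_div_pi_sq_le_sinc_sq ?_)
        have hdist : |t - c| ≤ 1 / 2 := abs_le.2 ⟨by linarith, by linarith⟩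
        rw [abs_mul, abs_of_pos Real.pi_pos]
        nlinarith [Real.pi_pos]
      _ ≤ ∫⁻ t, ENNReal.ofReal (Real.sinc (π * (t - c)) ^ 2) ∂ν := setLIntegral_le_lintegral _ _
      _ ≤ ENNReal.ofReal B := h.lintegral_sinc_sq_le c
  have hpos : 0 < 4 / π ^ 2 := by positivity
  rwa [mul_comm, ← ENNReal.le_div_iff_mul_le (Or.inl (ENNReal.ofReal_pos.2 hpos).ne')
    (Or.inl ENNReal.ofReal_ne_top), ← ENNReal.ofReal_div_of_pos hpos, div_div_eq_mul_div,
    mul_div_assoc, mul_comm] at hmain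

-- The sinc tails outside `[c - M, c + M]` carry at most `π² B / (2 M) ≤ A / 2` of the lower
-- frame bound `A`, so `[c - M, c + M]` carries the rest.
lemma IsFrameBounds1.exists_le_measure_Ico (h : IsFrameBounds1 μ₀ ν A B) (hA : 0 < A) :
    ∃ L > 0, ∀ x, ENNReal.ofReal (A / 2) ≤ ν (Ico x (x + L)) := by
  set M := max 1 (π ^ 2 * B / A)
  have hM : 1 ≤ M := le_max_left _ _
  have hBM : π ^ 2 * B ≤ A * M := by
    rw [← div_le_iff₀' hA]; exact le_max_right _ _
  refine ⟨2 * M + 1, by positivity, fun x ↦ ?_⟩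
  set c := x + M + 1 / 2 with hc
  set E := Icc (c - M) (c + M)
  set g := fun t ↦ ENNReal.ofReal (Real.sinc (π * (t - c)) ^ 2)
  have hE : ∫⁻ t in E, g t ∂ν ≤ ν E :=
    calc ∫⁻ t in E, g t ∂ν ≤ ∫⁻ _ in E, 1 ∂ν :=
          setLIntegral_mono' measurableSet_Icc fun t _ ↦
            ENNReal.ofReal_le_one.2 (Real.sinc_sq_le_one _)
      _ = ν E := setLIntegral_one _
  have htail : ∫⁻ t in Eᶜ, g t ∂ν ≤ ENNReal.ofReal (A / 2) :=
    calc ∫⁻ t in Eᶜ, g t ∂ν ≤ ENNReal.ofReal (1 / M) * (2 * ENNReal.ofReal (π ^ 2 / 4 * B)) :=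
          setLIntegral_compl_Icc_sinc_sq_le h.isBesselBound1.measure_Icc_le c hM
      _ = ENNReal.ofReal (π ^ 2 * B / (2 * M)) := by
        rw [← ENNReal.ofReal_ofNat 2, ← ENNReal.ofReal_mul zero_le_two,
          ← ENNReal.ofReal_mul (by positivity)]
        congr 1
        field_simp
        ring
      _ ≤ ENNReal.ofReal (A / 2) := by
        refine ENNReal.ofReal_le_ofReal ?_
        rw [div_le_div_iff₀ (by positivity) two_pos]
        nlinarith
  have hsum : ENNReal.ofReal (A / 2) + ENNReal.ofReal (A / 2) ≤ ν E + ENNReal.ofReal (A / 2) :=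
    calc ENNReal.ofReal (A / 2) + ENNReal.ofReal (A / 2) = ENNReal.ofReal A := by
          rw [← ENNReal.ofReal_add (by positivity) (by positivity), add_halves]
      _ ≤ ∫⁻ t, g t ∂ν := h.le_lintegral_sinc_sq c
      _ = ∫⁻ t in E, g t ∂ν + ∫⁻ t in Eᶜ, g t ∂ν := (lintegral_add_compl g measurableSet_Icc).symm
      _ ≤ ν E + ENNReal.ofReal (A / 2) := add_le_add hE htail
  refine ((ENNReal.add_le_add_iff_right ENNReal.ofReal_ne_top).1 hsum).trans (measure_mono ?_)
  exact Icc_subset_Ico_iff (by linarith) |>.2 ⟨by linarith, by linarith⟩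

end FrameMeasure

section BeurlingDensity

variable {ν : Measure ℝ}

lemma measure_Ico_le_nat_mul {C : ℝ≥0∞} (hν : ∀ a, ν (Icc a (a + 1)) ≤ C) (x : ℝ) (n : ℕ) :
    ν (Ico x (x + n)) ≤ n * C := by
  induction n with
  | zero => simp
  | succ n ih =>
    have hsub : Ico x (x + (n + 1 : ℕ)) ⊆ Ico x (x + n) ∪ Icc (x + n) (x + n + 1) := by
      intro t ⟨hxt, htx⟩
      push_cast at htx
      rcases lt_or_ge t (x + n) with h | h
      · exact Or.inl ⟨hxt, h⟩
      · exact Or.inr ⟨h, by linarith⟩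
    calc ν (Ico x (x + (n + 1 : ℕ))) ≤ ν (Ico x (x + n)) + ν (Icc (x + n) (x + n + 1)) :=
          (measure_mono hsub).trans (measure_union_le _ _)
      _ ≤ n * C + C := add_le_add ih (hν _)
      _ = (n + 1 : ℕ) * C := by push_cast; ring

lemma le_measure_Ico_nat_mul {d : ℝ≥0∞} {L : ℝ} (hL : 0 ≤ L)
    (hν : ∀ x, d ≤ ν (Ico x (x + L))) (x : ℝ) (n : ℕ) :
    n * d ≤ ν (Ico x (x + n * L)) := by
  induction n with
  | zero => simp
  | succ n ih =>
    have hle : x ≤ x + n * L := by have := Nat.cast_nonneg (α := ℝ) n; nlinarith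
    have hunion : Ico x (x + n * L) ∪ Ico (x + n * L) (x + n * L + L) =
        Ico x (x + (n + 1 : ℕ) * L) := by
      rw [Ico_union_Ico_eq_Ico hle (by linarith)]; push_cast; ring_nf
    calc ((n + 1 : ℕ) : ℝ≥0∞) * d = n * d + d := by push_cast; ring
      _ ≤ ν (Ico x (x + n * L)) + ν (Ico (x + n * L) (x + n * L + L)) := add_le_add ih (hν _)
      _ = ν (Ico x (x + (n + 1 : ℕ) * L)) := by
        rw [← hunion, measure_union Ico_disjoint_Ico_same measurableSet_Ico]

lemma eventually_measure_cube1_le {C : ℝ} (hν : ∀ a, ν (Icc a (a + 1)) ≤ ENNReal.ofReal C) :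
    ∀ᶠ R in atTop, ∀ x, ν (cube1 x R) ≤ ENNReal.ofReal (2 * C * R) := by
  filter_upwards [eventually_ge_atTop 1] with R hR x
  have hceil : (⌈R⌉₊ : ℝ) < R + 1 := Nat.ceil_lt_add_one (by linarith)
  calc ν (cube1 x R) ≤ ν (Ico x (x + ⌈R⌉₊)) :=
        measure_mono (Ico_subset_Ico_right (by linarith [Nat.le_ceil R]))
    _ ≤ ⌈R⌉₊ * ENNReal.ofReal C := measure_Ico_le_nat_mul hν x _
    _ = ENNReal.ofReal (⌈R⌉₊ * C) := by
      rw [ENNReal.ofReal_mul (by positivity), ENNReal.ofReal_natCast]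
    _ ≤ ENNReal.ofReal (2 * C * R) := by
      refine ENNReal.ofReal_le_ofReal_iff'.2 ?_
      rcases le_or_gt C 0 with hC | hC
      · exact Or.inr (mul_nonpos_of_nonneg_of_nonpos (by positivity) hC)
      · exact Or.inl (by nlinarith)

lemma eventually_le_measure_cube1 {d L : ℝ} (hL : 0 < L)
    (hν : ∀ x, ENNReal.ofReal d ≤ ν (Ico x (x + L))) :
    ∀ᶠ R in atTop, ∀ x, ENNReal.ofReal (d / (2 * L) * R) ≤ ν (cube1 x R) := by
  filter_upwards [eventually_ge_atTop L] with R hR x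
  set n := ⌊R / L⌋₊
  have hn1 : 1 ≤ n := Nat.le_floor (by rw [Nat.cast_one, le_div_iff₀ hL]; linarith)
  have hnR : n * L ≤ R := (le_div_iff₀ hL).1 (Nat.floor_le (div_nonneg (by linarith) hL.le))
  have hRn : R < 2 * n * L := by
    have := (div_lt_iff₀ hL).1 (Nat.lt_floor_add_one (R / L))
    have : (1 : ℝ) ≤ n := by exact_mod_cast hn1
    nlinarith
  calc ENNReal.ofReal (d / (2 * L) * R) ≤ ENNReal.ofReal (n * d) := by
        refine ENNReal.ofReal_le_ofReal_iff'.2 ?_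
        rcases le_or_gt d 0 with hd | hd
        · exact Or.inr (mul_nonpos_of_nonpos_of_nonneg
            (div_nonpos_of_nonpos_of_nonneg hd (by positivity)) (by linarith))
        · refine Or.inl ?_
          rw [div_mul_eq_mul_div, div_le_iff₀ (by positivity)]
          nlinarith
    _ = n * ENNReal.ofReal d := by rw [ENNReal.ofReal_mul (by positivity), ENNReal.ofReal_natCast]
    _ ≤ ν (Ico x (x + n * L)) := le_measure_Ico_nat_mul hL.le hν x n
    _ ≤ ν (cube1 x R) := measure_mono (Ico_subset_Ico_right (by linarith))

lemma beurlingDensity1_le_of_eventually_le {C α : ℝ}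
    (hν : ∀ᶠ R in atTop, ∀ x, ν (cube1 x R) ≤ ENNReal.ofReal (C * R)) (hα : 1 ≤ α) :
    beurlingDensity1 ν α ≤ ENNReal.ofReal C := by
  refine limsup_le_of_le (by isBoundedDefault) ?_
  filter_upwards [hν, eventually_ge_atTop 1] with R hνR hR
  refine iSup_le fun x ↦ ENNReal.div_le_of_le_mul ?_
  calc ν (cube1 x R) ≤ ENNReal.ofReal C * ENNReal.ofReal R := by
        rw [← ENNReal.ofReal_mul' (by linarith)]; exact hνR x
    _ ≤ ENNReal.ofReal C * ENNReal.ofReal (R ^ α) := by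
        gcongr
        simpa using Real.rpow_le_rpow_of_exponent_le hR hα

lemma beurlingDim1_le_one_of_eventually_le {C : ℝ}
    (hν : ∀ᶠ R in atTop, ∀ x, ν (cube1 x R) ≤ ENNReal.ofReal (C * R)) :
    beurlingDim1 ν ≤ 1 := by
  refine iSup₂_le fun α _ ↦ iSup_le fun hinf ↦ ?_
  by_contra! hα
  have hα1 : 1 ≤ α := by
    by_contra! h
    exact (ENNReal.ofReal_lt_one.2 h).not_ge hα.le
  exact ENNReal.ofReal_ne_top (top_le_iff.1 (hinf ▸ beurlingDensity1_le_of_eventually_le hν hα1))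

lemma le_lowerBeurlingDensity1_of_eventually_le {c : ℝ}
    (hν : ∀ᶠ R in atTop, ∀ x, ENNReal.ofReal (c * R) ≤ ν (cube1 x R)) :
    ENNReal.ofReal c ≤ lowerBeurlingDensity1 ν := by
  refine le_liminf_of_le (by isBoundedDefault) ?_
  filter_upwards [hν, eventually_gt_atTop 0] with R hνR hR
  refine le_iInf fun x ↦ ?_
  rw [ENNReal.le_div_iff_mul_le (Or.inl (ENNReal.ofReal_pos.2 hR).ne')
      (Or.inl ENNReal.ofReal_ne_top),
    ← ENNReal.ofReal_mul' hR.le]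
  exact hνR x

lemma beurlingDensity1_eq_top_of_eventually_le {c α : ℝ} (hc : 0 < c)
    (hν : ∀ᶠ R in atTop, ∀ x, ENNReal.ofReal (c * R) ≤ ν (cube1 x R)) (hα : α < 1) :
    beurlingDensity1 ν α = ∞ := by
  refine ENNReal.eq_top_of_forall_nnreal_le fun r ↦
    le_limsup_of_frequently_le ?_ (by isBoundedDefault)
  have hgrowth : Tendsto (fun R : ℝ ↦ c * R ^ (1 - α)) atTop atTop :=
    (tendsto_rpow_atTop (by linarith)).const_mul_atTop hc
  refine Eventually.frequently ?_
  filter_upwards [hν, hgrowth.eventually_ge_atTop r, eventually_gt_atTop 0] with R hνR hrR hR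
  refine le_iSup_of_le 0 ?_
  have hRα : 0 < R ^ α := Real.rpow_pos_of_pos hR α
  rw [ENNReal.le_div_iff_mul_le (Or.inl (ENNReal.ofReal_pos.2 hRα).ne')
      (Or.inl ENNReal.ofReal_ne_top),
    ← ENNReal.ofReal_coe_nnreal, ← ENNReal.ofReal_mul r.coe_nonneg]
  refine le_trans (ENNReal.ofReal_le_ofReal ?_) (hνR 0)
  calc (r : ℝ) * R ^ α ≤ c * R ^ (1 - α) * R ^ α := by gcongr
    _ = c * R := by rw [mul_assoc, ← Real.rpow_add hR]; norm_num

lemma one_le_beurlingDim1_of_eventually_le {c : ℝ} (hc : 0 < c)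
    (hν : ∀ᶠ R in atTop, ∀ x, ENNReal.ofReal (c * R) ≤ ν (cube1 x R)) :
    1 ≤ beurlingDim1 ν := by
  refine le_of_forall_lt fun w hw ↦ ?_
  obtain ⟨α, hα0, hwα, hα1⟩ := ENNReal.lt_iff_exists_real_btwn.1 hw
  refine hwα.trans_le (le_iSup₂_of_le α hα0 (le_iSup_of_le ?_ le_rfl))
  exact beurlingDensity1_eq_top_of_eventually_le hc hν (ENNReal.ofReal_lt_one.1 hα1)

end BeurlingDensity

/-- If `ν` is a frame measure for Lebesgue measure restricted to `[-1/2, 1/2]`, then the lower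
Beurling density of `ν` is positive and `dim ν = 1`. -/
theorem stmt16 (ν : Measure ℝ)
    (hframe : ∃ A B : ℝ, 0 < A ∧ 0 < B ∧
      IsFrameBounds1 (volume.restrict (Set.Icc (-(1 / 2) : ℝ) (1 / 2))) ν A B) :
    0 < lowerBeurlingDensity1 ν ∧ beurlingDim1 ν = 1 := by
  obtain ⟨A, B, hA, -, hframe⟩ := hframe
  obtain ⟨L, hL, hmass⟩ := hframe.exists_le_measure_Ico hA
  have hlower := eventually_le_measure_cube1 hL hmass
  have hupper := eventually_measure_cube1_le hframe.isBesselBound1.measure_Icc_le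
  have hc : 0 < A / 2 / (2 * L) := by positivity
  exact ⟨(ENNReal.ofReal_pos.2 hc).trans_le (le_lowerBeurlingDensity1_of_eventually_le hlower),
    (beurlingDim1_le_one_of_eventually_le hupper).antisymm
      (one_le_beurlingDim1_of_eventually_le hc hlower)⟩
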